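/- Let uv be a segment of length X, let 0 < η₁ < 1 and 0 < δ^s ≤ (1−η₁)/4. Suppose x₁y₁, ..., x_ay_a are segments each of length at most δ^s·X whose orthogonal projections onto the line through uv are pairwise disjoint intervals contained in the projection of uv extended by δ^s·X on each side, and such that each segment x_jy_j is nearly parallel to uv (projection length ≥ length·cos θ₀ with θ₀ small). If additionally a subsegment of uv of length η₁·X is disjoint from all projections, then Σ_{j=1}^{a} ‖x_j−y_j‖ ≤ (1 − η₁ + 2δ^s)·X / cos θ₀. -/

import Mathlib

open scoped RealInnerProductSpace

abbrev Pt (d : ℕ) := EuclideanSpace ℝ (Fin d)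

/-- Scalar coordinate of the orthogonal projection of `p` onto the line through `u`
in direction `v − u`, normalized so that `u ↦ 0` and `v ↦ X` where `X = ‖v − u‖`. -/
noncomputable def projCoord {d : ℕ} (u v : Pt d) (X : ℝ) (p : Pt d) : ℝ :=
  ⟪p - u, v - u⟫ / X

/-- segments x_jy_j of length ≤ δ^s·X, nearly parallel to uv, whose
projections onto the line of uv are pairwise disjoint intervals inside the δ^s·X-extended
projection of uv and avoid a subsegment of uv of length η₁·X, have total length at most
(1 − η₁ + 2δ^s)·X / cos θ₀. -/
theorem stmt13 (d : ℕ) (u v : Pt d) (X η₁ δ θ₀ : ℝ) (s : ℕ) (a : ℕ)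
    (x y : Fin a → Pt d)
    (hX : ‖v - u‖ = X) (hXpos : 0 < X)
    (hη : 0 < η₁) (hη' : η₁ < 1)
    (hδ : 0 < δ ^ s) (hδ' : δ ^ s ≤ (1 - η₁) / 4)
    (hθ : 0 ≤ θ₀) (hθ' : θ₀ < Real.pi / 2)
    (hlen : ∀ j, ‖y j - x j‖ ≤ δ ^ s * X)
    (hpar : ∀ j, Real.cos θ₀ * ‖y j - x j‖ ≤
      |projCoord u v X (y j) - projCoord u v X (x j)|)
    (hdisj : ∀ j j', j ≠ j' →
      Disjoint (Set.uIcc (projCoord u v X (x j)) (projCoord u v X (y j)))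
        (Set.uIcc (projCoord u v X (x j')) (projCoord u v X (y j'))))
    (hcont : ∀ j, Set.uIcc (projCoord u v X (x j)) (projCoord u v X (y j)) ⊆
      Set.Icc (-(δ ^ s * X)) (X + δ ^ s * X))
    (hgap : ∃ c : ℝ, 0 ≤ c ∧ c + η₁ * X ≤ X ∧ ∀ j,
      Disjoint (Set.uIcc (projCoord u v X (x j)) (projCoord u v X (y j)))
        (Set.Icc c (c + η₁ * X))) :
    ∑ j, ‖x j - y j‖ ≤ (1 - η₁ + 2 * δ ^ s) * X / Real.cos θ₀ := by

  have hcos : 0 < Real.cos θ₀ := Real.cos_pos_of_mem_Ioo ⟨by linarith [Real.pi_pos], hθ'⟩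
  set p : Pt d → ℝ := projCoord u v X with hp
  set I : Fin a → Set ℝ := fun j => Set.uIcc (p (x j)) (p (y j)) with hI
  obtain ⟨c, hc0, hcX, hcdisj⟩ := hgap
  -- key: sum of projection lengths bounded
  have key : ∑ j, |p (y j) - p (x j)| ≤ (1 - η₁ + 2 * δ ^ s) * X := by
    have hvol : ∀ j, MeasureTheory.volume (I j) = ENNReal.ofReal |p (y j) - p (x j)| := by
      intro j
      show MeasureTheory.volume (Set.uIcc (p (x j)) (p (y j))) = _
      rw [Set.uIcc, Real.volume_Icc, max_sub_min_eq_abs, abs_sub_comm]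
    have hmeas : ∀ j ∈ Finset.univ, MeasurableSet (I j) := fun j _ => measurableSet_uIcc
    have hpw : ((Finset.univ : Finset (Fin a)) : Set (Fin a)).PairwiseDisjoint I := by
      intro j _ j' _ hjj'
      exact hdisj j j' hjj'
    have hsum : ∑ j, MeasureTheory.volume (I j)
        = MeasureTheory.volume (⋃ j ∈ Finset.univ, I j) :=
      (MeasureTheory.measure_biUnion_finset hpw hmeas).symm
    have hsub : (⋃ j ∈ Finset.univ, I j) ⊆
        Set.Icc (-(δ ^ s * X)) (X + δ ^ s * X) \ Set.Icc c (c + η₁ * X) := by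
      intro t ht
      simp only [Set.mem_iUnion] at ht
      obtain ⟨j, _, htj⟩ := ht
      exact ⟨hcont j htj, fun h => (hcdisj j).le_bot ⟨htj, h⟩ ⟩
    have hBsub : Set.Icc c (c + η₁ * X) ⊆ Set.Icc (-(δ ^ s * X)) (X + δ ^ s * X) := by
      apply Set.Icc_subset_Icc <;> nlinarith
    have hvdiff : MeasureTheory.volume
        (Set.Icc (-(δ ^ s * X)) (X + δ ^ s * X) \ Set.Icc c (c + η₁ * X))
        = ENNReal.ofReal ((1 - η₁ + 2 * δ ^ s) * X) := by
      rw [MeasureTheory.measure_diff hBsub measurableSet_Icc.nullMeasurableSet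
        (by simp [Real.volume_Icc]), Real.volume_Icc, Real.volume_Icc,
        ← ENNReal.ofReal_sub _ (by nlinarith)]
      ring_nf
    have : ∑ j, MeasureTheory.volume (I j) ≤ ENNReal.ofReal ((1 - η₁ + 2 * δ ^ s) * X) := by
      rw [hsum, ← hvdiff]
      exact MeasureTheory.measure_mono hsub
    rw [Finset.sum_congr rfl (fun j _ => hvol j),
      ← ENNReal.ofReal_sum_of_nonneg (fun j _ => abs_nonneg _)] at this
    exact (ENNReal.ofReal_le_ofReal_iff (by nlinarith)).mp this
  have hsum2 : Real.cos θ₀ * ∑ j, ‖x j - y j‖ ≤ ∑ j, |p (y j) - p (x j)| := by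
    rw [Finset.mul_sum]
    apply Finset.sum_le_sum
    intro j _
    rw [norm_sub_rev]
    exact hpar j
  rw [le_div_iff₀ hcos, mul_comm]
  linarith
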